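/- Let x be a vertex of a tree T. Then γ_cg'(T|x) = ∞ if and only if x is not a leaf and x has a neighbor of degree 2. -/

import Mathlib

open Finset

namespace ConnDomGame

variable {V : Type*} [Fintype V] [DecidableEq V]

/-- The closed neighborhood of a finite set of vertices. -/
def nbhd (G : SimpleGraph V) [DecidableRel G.Adj] (D : Finset V) : Finset V :=
  univ.filter fun u => u ∈ D ∨ ∃ v ∈ D, G.Adj u v

/-- The legal moves in the connected domination game on `G` with predominated set `S`,
from the position where the set of played vertices is `D`: a legal move must dominate
a not-yet-dominated vertex and (except for the first move) be adjacent to a played vertex. -/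
def legalMoves (G : SimpleGraph V) [DecidableRel G.Adj] (S D : Finset V) : Finset V :=
  univ.filter fun v =>
    ¬ (nbhd G {v} ⊆ S ∪ nbhd G D) ∧ (D = ∅ ∨ ∃ u ∈ D, G.Adj v u)

/-- Optimal number of further moves in the connected domination game on `G` with
predominated set `S`, from the position with played set `D`; `turn = true` means
Dominator (the minimizer) is to move.  The value is `⊤` if the player to move can
force the game to get stuck with an undominated vertex remaining.  The fuel
argument `n` is sufficient whenever `n + D.card ≥ Fintype.card V`. -/
noncomputable def val (G : SimpleGraph V) [DecidableRel G.Adj] (S : Finset V) :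
    Bool → ℕ → Finset V → ℕ∞
  | _, 0, D => if univ ⊆ S ∪ nbhd G D then 0 else ⊤
  | turn, n + 1, D =>
    if h : (legalMoves G S D).Nonempty then
      if turn then
        1 + (legalMoves G S D).inf' h fun v => val G S false n (insert v D)
      else
        1 + (legalMoves G S D).sup' h fun v => val G S true n (insert v D)
    else if univ ⊆ S ∪ nbhd G D then 0 else ⊤

/-- The Dominator-start game connected domination number of `G` with the vertices of `S`
predominated (`γ_cg(G|S)`; for `S = ∅` this is `γ_cg(G)`). -/
noncomputable def gammaCG (G : SimpleGraph V) [DecidableRel G.Adj] (S : Finset V) : ℕ∞ :=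
  val G S true (Fintype.card V) ∅

/-- The Staller-start game connected domination number of `G` with `S` predominated. -/
noncomputable def gammaCG' (G : SimpleGraph V) [DecidableRel G.Adj] (S : Finset V) : ℕ∞ :=
  val G S false (Fintype.card V) ∅

/-- The connected domination number of `G` with the set `S` predominated:
minimum size of a set `D` inducing a connected subgraph and dominating all
vertices outside `S`. -/
noncomputable def gammaC (G : SimpleGraph V) (S : Finset V) : ℕ :=
  sInf {k | ∃ D : Finset V, D.card = k ∧ (G.induce (D : Set V)).Connected ∧
    ∀ u, u ∈ S ∨ u ∈ D ∨ ∃ v ∈ D, G.Adj u v}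

/-- `l` is a legal sequence of first moves of the connected domination game on `G`
with predominated set `S`. -/
def LegalSeq (G : SimpleGraph V) [DecidableRel G.Adj] (S : Finset V) (l : List V) : Prop :=
  ∀ i (h : i < l.length), l.get ⟨i, h⟩ ∈ legalMoves G S (l.take i).toFinset

end ConnDomGame

open ConnDomGame

section Helpers

variable {V : Type*} [Fintype V] [DecidableEq V] {T : SimpleGraph V} [DecidableRel T.Adj]

lemma mem_nbhd {D : Finset V} {u : V} : u ∈ nbhd T D ↔ u ∈ D ∨ ∃ v ∈ D, T.Adj u v := by
  simp [nbhd]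

lemma mem_nbhd_of_mem {D : Finset V} {u : V} (h : u ∈ D) : u ∈ nbhd T D :=
  mem_nbhd.2 (Or.inl h)

lemma mem_nbhd_of_adj {D : Finset V} {u v : V} (hv : v ∈ D) (h : T.Adj u v) : u ∈ nbhd T D :=
  mem_nbhd.2 (Or.inr ⟨v, hv, h⟩)

lemma mem_legalMoves {S D : Finset V} {v : V} :
    v ∈ legalMoves T S D ↔
      ¬ (nbhd T {v} ⊆ S ∪ nbhd T D) ∧ (D = ∅ ∨ ∃ u ∈ D, T.Adj v u) := by
  simp [legalMoves]

lemma self_mem_nbhd_singleton (v : V) : v ∈ nbhd T ({v} : Finset V) :=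
  mem_nbhd_of_mem (mem_singleton_self v)

lemma adj_mem_nbhd_singleton {u v : V} (h : T.Adj u v) : u ∈ nbhd T ({v} : Finset V) :=
  mem_nbhd_of_adj (mem_singleton_self v) h

end Helpers

section Forward

variable {V : Type*} [Fintype V] [DecidableEq V] {T : SimpleGraph V} [DecidableRel T.Adj]

lemma staller_wins (hT : T.IsTree) {x y z w : V} (hxy : T.Adj x y) (hdy : T.degree y = 2)
    (hyz : T.Adj y z) (hzx : z ≠ x) (hxw : T.Adj x w) (hwy : w ≠ y) :
    gammaCG' T {x} = ⊤ := by
  classical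
  have hyx : y ≠ x := hxy.ne'
  have hzy : z ≠ y := hyz.ne'
  -- the neighborhood of y is exactly {x, z}
  have nfy : T.neighborFinset y = {x, z} := by
    refine (Finset.eq_of_subset_of_card_le ?_ ?_).symm
    · intro s hs
      rcases mem_insert.mp hs with rfl | hs
      · exact (T.mem_neighborFinset y s).2 hxy.symm
      · rw [mem_singleton] at hs
        exact hs ▸ (T.mem_neighborFinset y z).2 hyz
    · rw [← T.card_neighborFinset_eq_degree] at hdy
      rw [hdy, card_insert_of_notMem (by simp [hzx.symm]), card_singleton]
  -- the side of z when y is deleted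
  set C : V → Prop := fun c => ∃ wk : T.Walk z c, y ∉ wk.support with hC
  have hCz : C z := ⟨SimpleGraph.Walk.nil, by simp [hzy.symm]⟩
  have hCclosed : ∀ c, C c → ∀ v, T.Adj c v → v ≠ y → C v := by
    rintro c ⟨wk, hwk⟩ v hadj hvy
    exact ⟨wk.concat hadj, by
      rw [SimpleGraph.Walk.support_concat]
      simp only [List.concat_eq_append, List.mem_append, List.mem_singleton]
      rintro (h | rfl)
      exacts [hwk h, hvy rfl]⟩
  have hCx : ¬ C x := by
    rintro ⟨wk, hwk⟩
    have hyp : y ∉ wk.toPath.1.support := fun h => hwk (wk.support_toPath_subset h)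
    have hP : (SimpleGraph.Walk.cons hyz.symm
        (SimpleGraph.Walk.cons hxy.symm SimpleGraph.Walk.nil) : T.Walk z x).IsPath := by
      simp [SimpleGraph.Walk.isPath_def, hzy, hzx, hyx]
    have := hT.IsAcyclic.path_unique ⟨_, hP⟩ wk.toPath
    apply hyp
    rw [← congrArg Subtype.val this]
    simp
  have hCw : ¬ C w := fun hc => hCx (hCclosed w hc x hxw.symm hyx.symm)
  -- no position contained in C can be fully dominated
  have hndom : ∀ {D : Finset V}, (∀ c ∈ D, C c) → ¬ (univ : Finset V) ⊆ {x} ∪ nbhd T D := by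
    intro D hCD hsub
    have hw := hsub (mem_univ w)
    rcases mem_union.mp hw with hw | hw
    · exact hxw.ne' (mem_singleton.mp hw)
    · rcases mem_nbhd.mp hw with hw | ⟨u, hu, hadj⟩
      · exact hCw (hCD w hw)
      · exact hCw (hCclosed u (hCD u hu) w hadj.symm hwy)
  -- main invariant
  have main : ∀ n (D : Finset V) (turn : Bool), z ∈ D → (∀ c ∈ D, C c) →
      val T {x} turn n D = ⊤ := by
    intro n
    induction n with
    | zero =>
      intro D turn hzD hCD
      rw [ConnDomGame.val, if_neg (hndom hCD)]
    | succ n ih =>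
      intro D turn hzD hCD
      rw [ConnDomGame.val]
      by_cases h : (legalMoves T {x} D).Nonempty
      · rw [dif_pos h]
        have ysub : nbhd T {y} ⊆ {x} ∪ nbhd T D := by
          intro s hs
          rcases mem_nbhd.mp hs with hs | ⟨t', ht', hadj'⟩
          · rw [mem_singleton] at hs
            rw [hs]
            exact mem_union_right _ (mem_nbhd_of_adj hzD hyz)
          · rw [mem_singleton] at ht'
            have hnf : s ∈ T.neighborFinset y := (T.mem_neighborFinset y s).2 (ht' ▸ hadj').symm
            rw [nfy, mem_insert, mem_singleton] at hnf
            rcases hnf with h1 | h1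
            · rw [h1]; exact mem_union_left _ (mem_singleton_self x)
            · rw [h1]; exact mem_union_right _ (mem_nbhd_of_mem hzD)
        have key : ∀ v ∈ legalMoves T {x} D, ∀ t : Bool,
            val T {x} t n (insert v D) = ⊤ := by
          intro v hv t
          have hleg := (mem_legalMoves.mp hv)
          obtain ⟨u, hu, hadj⟩ := hleg.2.resolve_left (ne_empty_of_mem hzD)
          have hvy : v ≠ y := by rintro rfl; exact hleg.1 ysub
          refine ih (insert v D) t (mem_insert_of_mem hzD) ?_
          intro c hc
          rcases mem_insert.mp hc with rfl | hc
          · exact hCclosed u (hCD u hu) c hadj.symm hvy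
          · exact hCD c hc
        cases turn
        · simp only [Bool.false_eq_true, if_false]
          obtain ⟨v₀, hv₀⟩ := id h
          have : (legalMoves T {x} D).sup' h (fun v => val T {x} true n (insert v D)) = ⊤ :=
            top_unique ((key v₀ hv₀ true).ge.trans (Finset.le_sup' (fun v => val T {x} true n (insert v D)) hv₀))
          rw [this]; simp
        · simp only [if_true]
          have : (legalMoves T {x} D).inf' h (fun v => val T {x} false n (insert v D)) = ⊤ :=
            top_unique (Finset.le_inf' h _ fun v hv => (key v hv false).ge)
          rw [this]; simp
      · rw [dif_neg h, if_neg (hndom hCD)]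
  -- conclude
  have hpos : 0 < Fintype.card V := Fintype.card_pos_iff.2 ⟨x⟩
  obtain ⟨n, hn⟩ : ∃ n, Fintype.card V = n + 1 :=
    ⟨Fintype.card V - 1, (Nat.succ_pred_eq_of_pos hpos).symm⟩
  rw [gammaCG', hn, ConnDomGame.val]
  have hzleg : z ∈ legalMoves T {x} (∅ : Finset V) := by
    rw [mem_legalMoves]
    refine ⟨?_, Or.inl rfl⟩
    intro hsub
    have := hsub (self_mem_nbhd_singleton z)
    rcases mem_union.mp this with h | h
    · exact hzx (mem_singleton.mp h)
    · rcases mem_nbhd.mp h with h2 | ⟨u, hu, _⟩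
      · exact absurd h2 (notMem_empty z)
      · exact absurd hu (notMem_empty u)
  have h : (legalMoves T {x} (∅ : Finset V)).Nonempty := ⟨z, hzleg⟩
  rw [dif_pos h]
  simp only [Bool.false_eq_true, if_false]
  have : (legalMoves T {x} (∅ : Finset V)).sup' h
      (fun v => val T {x} true n (insert v ∅)) = ⊤ := by
    refine top_unique (le_trans ?_ (Finset.le_sup' _ hzleg))
    rw [LawfulSingleton.insert_empty_eq, main n {z} true (mem_singleton_self z)
      (by intro c hc; rw [mem_singleton] at hc; subst hc; exact hCz)]
  rw [this]; simp

end Forward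

section Backward

variable {V : Type*} [Fintype V] [DecidableEq V] {T : SimpleGraph V} [DecidableRel T.Adj]

/-- If the game is stuck (no legal moves) and the conditions of the theorem fail,
then walking from an undominated vertex (≠ x) towards `D` yields a contradiction. -/
lemma stuck_aux (hT : T.IsTree) (x : V)
    (hdeg : T.degree x = 1 ∨ ∀ y, T.Adj x y → T.degree y ≠ 2)
    {D : Finset V}
    (hconn : ∀ a ∈ D, ∀ b ∈ D, ∃ p : T.Walk a b, ∀ c ∈ p.support, c ∈ D)
    (hstuck : legalMoves T {x} D = ∅)
    {d₀ : V} (hd₀ : d₀ ∈ D) :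
    ∀ n (a : V) (p : T.Walk a d₀), p.length ≤ n → p.IsPath →
      a ∉ nbhd T D → a ≠ x → False := by
  classical
  -- any vertex adjacent to D has its closed neighborhood inside {x} ∪ N[D]
  have hstuckfact : ∀ v, (∃ u ∈ D, T.Adj v u) → nbhd T {v} ⊆ {x} ∪ nbhd T D := by
    intro v hv
    by_contra hcon
    have : v ∈ legalMoves T {x} D := mem_legalMoves.2 ⟨hcon, Or.inr hv⟩
    rw [hstuck] at this
    exact notMem_empty v this
  intro n
  induction n with
  | zero =>
    intro a p hlen hp ha hax
    rw [Nat.le_zero] at hlen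
    have : a = d₀ := by
      cases p with
      | nil => rfl
      | cons h q => simp [SimpleGraph.Walk.length_cons] at hlen
    exact ha (this ▸ mem_nbhd_of_mem hd₀)
  | succ n ih =>
    intro a p hlen hp ha hax
    cases p with
    | nil => exact ha (mem_nbhd_of_mem hd₀)
    | @cons _ b _ hab q =>
      by_cases hb : b ∈ nbhd T D
      · rcases mem_nbhd.mp hb with hbD | ⟨d', hd', hbd'⟩
        · exact ha (mem_nbhd_of_adj hbD hab)
        · have hsub := hstuckfact b ⟨d', hd', hbd'⟩
          have haN : a ∈ nbhd T {b} := adj_mem_nbhd_singleton hab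
          rcases mem_union.mp (hsub haN) with h1 | h1
          · exact hax (mem_singleton.mp h1)
          · exact ha h1
      · by_cases hbx : b = x
        · subst hbx
          -- b = x; look one step further
          cases q with
          | nil => exact hb (mem_nbhd_of_mem hd₀)
          | @cons _ c _ hxc q2 =>
            by_cases hc : c ∈ nbhd T D
            · -- c is the crucial neighbor of x adjacent to D
              have hcD : c ∉ D := fun h => hb (mem_nbhd_of_adj h hxc)
              obtain ⟨d', hd', hcd'⟩ : ∃ d' ∈ D, T.Adj c d' := by
                rcases mem_nbhd.mp hc with h | h
                · exact absurd h hcD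
                · exact h
              have hsubc := hstuckfact c ⟨d', hd', hcd'⟩
              -- a and c are distinct neighbors of b = x
              have hac : a ≠ c := by
                have hcons := (SimpleGraph.Walk.cons_isPath_iff hab
                  (SimpleGraph.Walk.cons hxc q2)).mp hp
                intro h
                apply hcons.2
                rw [h, SimpleGraph.Walk.support_cons]
                exact List.mem_cons_of_mem _ q2.start_mem_support
              rcases hdeg with hdeg1 | hdeg2
              · -- degree x = 1, but a and c are distinct neighbors of x
                have hsub2 : ({a, c} : Finset V) ⊆ T.neighborFinset b := by
                  intro s hs
                  rw [mem_insert, mem_singleton] at hs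
                  rcases hs with h1 | h1
                  · rw [h1]; exact (T.mem_neighborFinset b a).2 hab.symm
                  · rw [h1]; exact (T.mem_neighborFinset b c).2 hxc
                have h2 : 2 ≤ T.degree b := by
                  rw [← T.card_neighborFinset_eq_degree]
                  calc 2 = ({a, c} : Finset V).card := by
                        rw [card_insert_of_notMem (by simp [hac]), card_singleton]
                    _ ≤ _ := card_le_card hsub2
                omega
              · -- every neighbor of x has degree ≠ 2, but c has degree 2
                refine hdeg2 c hxc ?_
                have hxd' : (b : V) ≠ d' := fun h => hb (h ▸ mem_nbhd_of_mem hd')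
                have hcx : c ≠ b := hxc.ne'
                have hcd'2 : c ≠ d' := fun h => hcD (h ▸ hd')
                have hnsub : T.neighborFinset c ⊆ {b, d'} := by
                  intro t ht
                  have hct : T.Adj c t := (T.mem_neighborFinset c t).1 ht
                  have htN : t ∈ nbhd T {c} := adj_mem_nbhd_singleton hct.symm
                  rcases mem_union.mp (hsubc htN) with h1 | h1
                  · rw [mem_singleton] at h1; rw [h1]; exact mem_insert_self b _
                  · -- t is dominated by D; show t = d' using acyclicity
                    rw [mem_insert, mem_singleton]
                    by_contra hcon
                    push_neg at hcon
                    obtain ⟨htx, htd'⟩ := hcon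
                    have htc : t ≠ c := hct.ne'
                    -- path t - c - d'
                    have hP1 : (SimpleGraph.Walk.cons hct.symm
                        (SimpleGraph.Walk.cons hcd' SimpleGraph.Walk.nil) : T.Walk t d').IsPath := by
                      simp [SimpleGraph.Walk.isPath_def, htc, htd', hcd'2]
                    -- a walk from t to d' avoiding c
                    obtain ⟨W2, hW2⟩ : ∃ W2 : T.Walk t d', c ∉ W2.support := by
                      rcases mem_nbhd.mp h1 with htD | ⟨d'', hd'', htd''⟩
                      · obtain ⟨q3, hq3⟩ := hconn t htD d' hd'
                        exact ⟨q3, fun h => hcD (hq3 c h)⟩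
                      · obtain ⟨q3, hq3⟩ := hconn d'' hd'' d' hd'
                        refine ⟨SimpleGraph.Walk.cons htd'' q3, ?_⟩
                        rw [SimpleGraph.Walk.support_cons]
                        intro hmem
                        rw [List.mem_cons] at hmem
                        rcases hmem with hmem | hmem
                        · exact htc hmem.symm
                        · exact hcD (hq3 c hmem)
                    have hcW2 : c ∉ W2.toPath.1.support := fun h => hW2 (W2.support_toPath_subset h)
                    have := hT.IsAcyclic.path_unique ⟨_, hP1⟩ W2.toPath
                    apply hcW2
                    rw [← congrArg Subtype.val this]
                    simp
                have hnsup : ({b, d'} : Finset V) ⊆ T.neighborFinset c := by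
                  intro s hs
                  rw [mem_insert, mem_singleton] at hs
                  rcases hs with h1 | h1
                  · rw [h1]; exact (T.mem_neighborFinset c b).2 hxc.symm
                  · rw [h1]; exact (T.mem_neighborFinset c d').2 hcd'
                rw [← T.card_neighborFinset_eq_degree, subset_antisymm hnsub hnsup,
                  card_insert_of_notMem (by simp [hxd']), card_singleton]
            · -- recurse from c
              have hq2path : q2.IsPath := hp.of_cons.of_cons
              have hcx : c ≠ b := by
                have h2 := (SimpleGraph.Walk.cons_isPath_iff hxc q2).mp hp.of_cons
                intro h
                exact h2.2 (h ▸ q2.start_mem_support)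
              refine ih c q2 ?_ hq2path hc hcx
              simp only [SimpleGraph.Walk.length_cons] at hlen
              omega
        · refine ih b q ?_ hp.of_cons hb hbx
          simp only [SimpleGraph.Walk.length_cons] at hlen
          omega

end Backward

section Backward2

variable {V : Type*} [Fintype V] [DecidableEq V] {T : SimpleGraph V} [DecidableRel T.Adj]

lemma stuck_dominated (hT : T.IsTree) (x : V)
    (hdeg : T.degree x = 1 ∨ ∀ y, T.Adj x y → T.degree y ≠ 2)
    {D : Finset V}
    (hconn : ∀ a ∈ D, ∀ b ∈ D, ∃ p : T.Walk a b, ∀ c ∈ p.support, c ∈ D)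
    (hne : D.Nonempty) (hstuck : legalMoves T {x} D = ∅) :
    (univ : Finset V) ⊆ {x} ∪ nbhd T D := by
  intro v _
  by_contra hv
  rw [mem_union, mem_singleton] at hv
  push_neg at hv
  obtain ⟨hvx, hvn⟩ := hv
  obtain ⟨d₀, hd₀⟩ := hne
  obtain ⟨wk⟩ : T.Reachable v d₀ := hT.isConnected.preconnected v d₀
  exact stuck_aux hT x hdeg hconn hstuck hd₀ wk.toPath.1.length v wk.toPath.1 le_rfl
    wk.toPath.2 hvn hvx

lemma conn_insert {D : Finset V}
    (hconn : ∀ a ∈ D, ∀ b ∈ D, ∃ p : T.Walk a b, ∀ c ∈ p.support, c ∈ D)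
    {v : V} (hv : D = ∅ ∨ ∃ u ∈ D, T.Adj v u) :
    ∀ a ∈ insert v D, ∀ b ∈ insert v D,
      ∃ p : T.Walk a b, ∀ c ∈ p.support, c ∈ insert v D := by
  rcases hv with rfl | ⟨u, hu, hadj⟩
  · intro a ha b hb
    simp only [LawfulSingleton.insert_empty_eq, mem_singleton] at ha hb
    subst ha; subst hb
    exact ⟨SimpleGraph.Walk.nil, by simp⟩
  · have base : ∀ b ∈ D, ∃ p : T.Walk v b, ∀ c ∈ p.support, c ∈ insert v D := by
      intro b hb
      obtain ⟨q, hq⟩ := hconn u hu b hb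
      refine ⟨SimpleGraph.Walk.cons hadj q, ?_⟩
      intro c hc
      rw [SimpleGraph.Walk.support_cons, List.mem_cons] at hc
      rcases hc with rfl | hc
      · exact mem_insert_self c D
      · exact mem_insert_of_mem (hq c hc)
    intro a ha b hb
    rcases mem_insert.mp ha with ha1 | ha1
    · rcases mem_insert.mp hb with hb1 | hb1
      · exact ⟨(SimpleGraph.Walk.nil : T.Walk v v).copy ha1.symm hb1.symm, by
          rw [SimpleGraph.Walk.support_copy]; simp⟩
      · obtain ⟨p, hp⟩ := base b hb1
        exact ⟨p.copy ha1.symm rfl, by rw [SimpleGraph.Walk.support_copy]; exact hp⟩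
    · rcases mem_insert.mp hb with hb1 | hb1
      · obtain ⟨p, hp⟩ := base a ha1
        exact ⟨p.reverse.copy rfl hb1.symm, fun c hc => hp c (by
          rw [SimpleGraph.Walk.support_copy, SimpleGraph.Walk.support_reverse,
            List.mem_reverse] at hc
          exact hc)⟩
      · obtain ⟨p, hp⟩ := hconn a ha1 b hb1
        exact ⟨p, fun c hc => mem_insert_of_mem (hp c hc)⟩

lemma val_ne_top (hT : T.IsTree) (x : V)
    (hdeg : T.degree x = 1 ∨ ∀ y, T.Adj x y → T.degree y ≠ 2) :
    ∀ n (D : Finset V) (turn : Bool), Fintype.card V ≤ n + D.card →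
      (∀ a ∈ D, ∀ b ∈ D, ∃ p : T.Walk a b, ∀ c ∈ p.support, c ∈ D) →
      val T {x} turn n D ≠ ⊤ := by
  intro n
  induction n with
  | zero =>
    intro D turn hcard hconn
    have hDuniv : D = univ :=
      Finset.eq_univ_of_card D (le_antisymm (card_le_univ D) (by simpa using hcard))
    rw [ConnDomGame.val, if_pos]
    · simp
    · intro u _
      exact mem_union_right _ (mem_nbhd_of_mem (hDuniv ▸ mem_univ u))
  | succ n ih =>
    intro D turn hcard hconn
    rw [ConnDomGame.val]
    by_cases h : (legalMoves T {x} D).Nonempty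
    · rw [dif_pos h]
      have key : ∀ v ∈ legalMoves T {x} D, ∀ t : Bool,
          val T {x} t n (insert v D) ≠ ⊤ := by
        intro v hv t
        have hleg := mem_legalMoves.mp hv
        have hvD : v ∉ D := by
          intro hvD
          apply hleg.1
          intro s hs
          rcases mem_nbhd.mp hs with hs | ⟨t', ht', hadj'⟩
          · rw [mem_singleton] at hs
            exact mem_union_right _ (mem_nbhd_of_mem (hs ▸ hvD))
          · rw [mem_singleton] at ht'
            exact mem_union_right _ (mem_nbhd_of_adj (ht' ▸ hvD) hadj')
        refine ih (insert v D) t ?_ (conn_insert hconn hleg.2)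
        rw [card_insert_of_notMem hvD]
        omega
      cases turn
      · simp only [Bool.false_eq_true, if_false]
        intro htop
        rcases WithTop.add_eq_top.mp htop with h1 | h1
        · exact ENat.one_ne_top h1
        · have hlt : (legalMoves T {x} D).sup' h
              (fun v => val T {x} true n (insert v D)) < ⊤ :=
            (Finset.sup'_lt_iff h).2 fun v hv => lt_top_iff_ne_top.2 (key v hv true)
          exact hlt.ne h1
      · simp only [if_true]
        intro htop
        rcases WithTop.add_eq_top.mp htop with h1 | h1
        · exact ENat.one_ne_top h1
        · obtain ⟨v₀, hv₀⟩ := id h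
          have hle : (legalMoves T {x} D).inf' h
              (fun v => val T {x} false n (insert v D)) ≤ val T {x} false n (insert v₀ D) :=
            Finset.inf'_le _ hv₀
          rw [h1] at hle
          exact key v₀ hv₀ false (top_le_iff.mp hle)
    · rw [dif_neg h]
      rw [Finset.not_nonempty_iff_eq_empty] at h
      rcases D.eq_empty_or_nonempty with rfl | hne
      · by_cases hcv : (univ : Finset V) ⊆ {x} ∪ nbhd T (∅ : Finset V)
        · rw [if_pos hcv]; simp
        · exfalso
          rw [Finset.not_subset] at hcv
          obtain ⟨v, _, hv⟩ := hcv
          have : v ∈ legalMoves T {x} (∅ : Finset V) := by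
            rw [mem_legalMoves]
            refine ⟨?_, Or.inl rfl⟩
            intro hsub
            exact hv (hsub (self_mem_nbhd_singleton v))
          rw [h] at this
          exact notMem_empty v this
      · rw [if_pos (stuck_dominated hT x hdeg hconn hne h)]
        simp
end Backward2

open ConnDomGame in
/-- For a vertex `x` of a tree `T`, Staller can force the Staller-start game on `T|x`
to get stuck with an undominated vertex (`γ_cg'(T|x) = ∞`) if and only if `x` is not
a leaf and `x` has a neighbor of degree `2`. -/
theorem gammaCG'_tree_predominated_eq_top_iff {V : Type*} [Fintype V] [DecidableEq V]
    (T : SimpleGraph V) [DecidableRel T.Adj] (hT : T.IsTree) (x : V) :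
    gammaCG' T {x} = ⊤ ↔ (T.degree x ≠ 1 ∧ ∃ y, T.Adj x y ∧ T.degree y = 2) := by
  constructor
  · intro htop
    by_contra hcon
    rw [not_and_or] at hcon
    have hdeg : T.degree x = 1 ∨ ∀ y, T.Adj x y → T.degree y ≠ 2 := by
      rcases hcon with h | h
      · exact Or.inl (not_not.mp h)
      · push_neg at h; exact Or.inr h
    exact val_ne_top hT x hdeg (Fintype.card V) ∅ false (by simp) (by simp) htop
  · rintro ⟨hdx, y, hxy, hdy⟩
    have hxnf : x ∈ T.neighborFinset y := (T.mem_neighborFinset y x).2 hxy.symm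
    obtain ⟨z, hz⟩ : ((T.neighborFinset y).erase x).Nonempty := by
      rw [← Finset.card_pos, Finset.card_erase_of_mem hxnf,
        T.card_neighborFinset_eq_degree, hdy]
      norm_num
    have hzx : z ≠ x := (Finset.mem_erase.mp hz).1
    have hyz : T.Adj y z := (T.mem_neighborFinset y z).1 (Finset.mem_erase.mp hz).2
    have hynf : y ∈ T.neighborFinset x := (T.mem_neighborFinset x y).2 hxy
    have hdx1 : 1 ≤ T.degree x := by
      rw [← T.card_neighborFinset_eq_degree]
      exact Finset.card_pos.2 ⟨y, hynf⟩
    obtain ⟨w, hw⟩ : ((T.neighborFinset x).erase y).Nonempty := by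
      rw [← Finset.card_pos, Finset.card_erase_of_mem hynf, T.card_neighborFinset_eq_degree]
      omega
    have hwy : w ≠ y := (Finset.mem_erase.mp hw).1
    have hxw : T.Adj x w := (T.mem_neighborFinset x w).1 (Finset.mem_erase.mp hw).2
    exact staller_wins hT hxy hdy hyz hzx hxw hwy
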